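/- (Formal recursion lemma underlying Theorem 3.1 and Proposition 3.4; analogue of Lusztig's Lemma 7.1.2.) For every integer m ≥ 0: −q_i^{−e(2m−a)} B y_m + y_m B = [m+1] y_{m+1} in A. (Applying this with X = B_{τi}, a = −c_{i,τi} gives the first sum in the recursion of Theorem 3.1, and with X = B_j, a = −c_{ij} it gives the recursion used in the proof of Proposition 3.4.) -/

import Mathlib

noncomputable section

/-- The quantum integer `[n]_v = (v^n - v^{-n})/(v - v^{-1})`. -/
def qint {K : Type*} [Field K] (v : RatFunc K) (n : ℤ) : RatFunc K :=
  (v ^ n - v ^ (-n)) / (v - v⁻¹)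

/-- The quantum factorial `[m]_v! = [1]_v [2]_v ⋯ [m]_v`. -/
def qfact {K : Type*} [Field K] (v : RatFunc K) (m : ℕ) : RatFunc K :=
  ∏ k ∈ Finset.range m, qint v ((k : ℤ) + 1)

/-- The divided power `x^{(m)} = x^m/[m]_v!` for `m ≥ 0`, and `0` for `m < 0`. -/
def dp {K : Type*} [Field K] {A : Type*} [Ring A] [Algebra (RatFunc K) A]
    (v : RatFunc K) (x : A) (m : ℤ) : A :=
  if m < 0 then 0 else (qfact v m.toNat)⁻¹ • x ^ m.toNat

/-! Multiplying by `B` only shifts divided powers, `B B^{(r)} = B^{(r)} B = [r+1] B^{(r+1)}`, so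
`B y_m`, `y_m B` and `y_{m+1}` are all combinations of the words `B^{(r)} X B^{(m+1-r)}`.
Comparing coefficients, the claim reduces to the quantum-integer identity
`q_i^{-e(m-r)} [r+1] + q_i^{e(r+1)} [m-r] = [m+1]`. -/

open Finset

section QuantumNumbers

variable {K : Type*} [Field K] (v : RatFunc K)

lemma qint_zero : qint v 0 = 0 := by simp [qint]

lemma qint_add (hv0 : v ≠ 0) {e : ℤ} (he : e = 1 ∨ e = -1) (p q : ℤ) :
    v ^ (-e * q) * qint v p + v ^ (e * p) * qint v q = qint v (p + q) := by
  unfold qint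
  rw [← mul_div_assoc, ← mul_div_assoc, ← add_div, neg_add, zpow_add₀ hv0, zpow_add₀ hv0]
  rcases he with rfl | rfl <;> simp only [neg_mul, one_mul, neg_neg, zpow_neg] <;>
    field_simp <;> ring

lemma qint_ne_zero (hv0 : v ≠ 0) (hfin : ¬IsOfFinOrder v) {n : ℕ} (hn : n ≠ 0) :
    qint v n ≠ 0 := by
  have numerator_ne_zero : ∀ k : ℕ, k ≠ 0 → v ^ (k : ℤ) - v ^ (-(k : ℤ)) ≠ 0 := by
    intro k hk h
    refine hfin (isOfFinOrder_iff_pow_eq_one.mpr ⟨2 * k, by positivity, ?_⟩)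
    rw [sub_eq_zero, zpow_neg, zpow_natCast] at h
    rw [two_mul, pow_add]
    nth_rw 2 [h]
    exact mul_inv_cancel₀ (pow_ne_zero _ hv0)
  refine div_ne_zero (numerator_ne_zero n hn) ?_
  simpa using numerator_ne_zero 1 one_ne_zero

lemma qfact_succ (n : ℕ) : qfact v (n + 1) = qfact v n * qint v (n + 1) := by
  simp [qfact, prod_range_succ]

end QuantumNumbers

lemma RatFunc.not_isOfFinOrder_X_pow {K : Type*} [Field K] {ε : ℕ} (hε : 0 < ε) :
    ¬IsOfFinOrder (RatFunc.X ^ ε : RatFunc K) := by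
  rw [isOfFinOrder_iff_pow_eq_one]
  rintro ⟨n, hn, h⟩
  rw [← pow_mul, ← RatFunc.algebraMap_X, ← map_pow,
    ← map_one (algebraMap (Polynomial K) (RatFunc K))] at h
  have := congrArg Polynomial.natDegree (RatFunc.algebraMap_injective K h)
  simp only [Polynomial.natDegree_X_pow, Polynomial.natDegree_one, mul_eq_zero] at this
  omega

section DividedPowers

variable {K : Type*} [Field K] {A : Type*} [Ring A] [Algebra (RatFunc K) A]
  (v : RatFunc K) (x : A)

lemma dp_natCast (n : ℕ) : dp v x n = (qfact v n)⁻¹ • x ^ n := by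
  simp [dp]

lemma commute_dp (n : ℤ) : Commute x (dp v x n) := by
  unfold dp
  split_ifs
  · exact Commute.zero_right x
  · exact (Commute.self_pow x _).smul_right _

lemma dp_of_neg {n : ℤ} (hn : n < 0) : dp v x n = 0 := if_pos hn

variable {v}

lemma mul_dp (hq : ∀ n : ℕ, qint v (n + 1) ≠ 0) (n : ℤ) :
    x * dp v x n = qint v (n + 1) • dp v x (n + 1) := by
  rcases lt_or_ge n 0 with hn | hn
  · rcases (show n = -1 ∨ n + 1 < 0 by omega) with rfl | hn'
    · simp [dp_of_neg, qint_zero]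
    · rw [dp_of_neg v x hn, dp_of_neg v x hn', mul_zero, smul_zero]
  lift n to ℕ using hn
  have hsucc : (n : ℤ) + 1 = (n + 1 : ℕ) := by push_cast; rfl
  rw [hsucc, dp_natCast, dp_natCast, qfact_succ, mul_smul_comm, ← pow_succ', smul_smul,
    mul_inv_rev, ← hsucc, mul_inv_cancel_left₀ (hq n)]

lemma dp_mul (hq : ∀ n : ℕ, qint v (n + 1) ≠ 0) (n : ℤ) :
    dp v x n * x = qint v (n + 1) • dp v x (n + 1) := by
  rw [← (commute_dp v x n).eq, mul_dp x hq]

end DividedPowers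

lemma Finset.sum_range_succ'_of_eq_zero {M : Type*} [AddCommMonoid M] (f : ℕ → M) {n : ℕ}
    (hf : f (n + 1) = 0) : ∑ i ∈ range (n + 1), f i = ∑ i ∈ range (n + 1), f (i + 1) + f 0 := by
  rw [← sum_range_succ' f (n + 1), sum_range_succ f (n + 1), hf, add_zero]

section QSerre

variable {K : Type*} [Field K] {A : Type*} [Ring A] [Algebra (RatFunc K) A]

def qSerreY (v : RatFunc K) (e a : ℤ) (B X : A) (m : ℕ) : A :=
  ∑ r ∈ range (m + 1), ((-1 : RatFunc K) ^ r * v ^ (e * (r : ℤ) * (a - (m : ℤ) + 1))) •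
    (dp v B (r : ℤ) * X * dp v B ((m : ℤ) - (r : ℤ)))

variable {v : RatFunc K} (e a : ℤ) (B X : A) (m : ℕ)

lemma mul_qSerreY (hq : ∀ n : ℕ, qint v (n + 1) ≠ 0) :
    B * qSerreY v e a B X m = ∑ r ∈ range (m + 1),
      ((-1 : RatFunc K) ^ r * v ^ (e * r * (a - m + 1)) * qint v (r + 1)) •
        (dp v B (r + 1) * X * dp v B (m - r)) := by
  simp only [qSerreY, mul_sum, mul_smul_comm, ← mul_assoc, mul_dp B hq, smul_mul_assoc, smul_smul]

lemma qSerreY_mul (hq : ∀ n : ℕ, qint v (n + 1) ≠ 0) :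
    qSerreY v e a B X m * B = ∑ r ∈ range (m + 1),
      ((-1 : RatFunc K) ^ r * v ^ (e * r * (a - m + 1)) * qint v (m + 1 - r)) •
        (dp v B r * X * dp v B (m + 1 - r)) := by
  simp only [qSerreY, sum_mul, smul_mul_assoc, mul_assoc, dp_mul B hq, mul_smul_comm, smul_smul,
    sub_add_eq_add_sub]

lemma qSerreY_succ :
    qSerreY v e a B X (m + 1) = ∑ r ∈ range (m + 2),
      ((-1 : RatFunc K) ^ r * v ^ (e * r * (a - m))) • (dp v B r * X * dp v B (m + 1 - r)) := by
  simp only [qSerreY, Nat.cast_add, Nat.cast_one, sub_add_eq_sub_sub, sub_add_cancel]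

lemma qSerreY_coeff_succ (hv0 : v ≠ 0) (he : e = 1 ∨ e = -1) (r : ℕ) :
    -(v ^ (-e * (2 * m - a)) * ((-1) ^ r * v ^ (e * r * (a - m + 1)) * qint v (r + 1)))
      + (-1) ^ (r + 1) * v ^ (e * ((r : ℤ) + 1) * (a - m + 1)) * qint v (m - r)
      = qint v (m + 1) * ((-1) ^ (r + 1) * v ^ (e * ((r : ℤ) + 1) * (a - m))) := by
  set P := v ^ (e * ((r : ℤ) + 1) * (a - m))
  have hleft : v ^ (-e * (2 * m - a)) * v ^ (e * r * (a - m + 1)) = P * v ^ (-e * (m - r)) := by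
    rw [← zpow_add₀ hv0, ← zpow_add₀ hv0]; ring_nf
  have hright : v ^ (e * ((r : ℤ) + 1) * (a - m + 1)) = P * v ^ (e * (r + 1)) := by
    rw [← zpow_add₀ hv0]; ring_nf
  have hsum := qint_add v hv0 he (r + 1) (m - r)
  rw [show (r : ℤ) + 1 + (m - r) = m + 1 by ring] at hsum
  rw [hright, ← hsum]
  linear_combination (-(-1 : RatFunc K) ^ r * qint v (r + 1)) * hleft

theorem qSerreY_recursion (hv0 : v ≠ 0) (hq : ∀ n : ℕ, qint v (n + 1) ≠ 0)
    (he : e = 1 ∨ e = -1) :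
    -(v ^ (-e * (2 * (m : ℤ) - a)) • (B * qSerreY v e a B X m)) + qSerreY v e a B X m * B
      = qint v ((m : ℤ) + 1) • qSerreY v e a B X (m + 1) := by
  rw [qSerreY_mul e a B X m hq, sum_range_succ'_of_eq_zero _ (by simp [qint_zero]),
    qSerreY_succ, sum_range_succ' _ (m + 1), mul_qSerreY e a B X m hq, smul_sum,
    ← sum_neg_distrib, smul_add, smul_sum, ← add_assoc, ← sum_add_distrib]
  congr 1
  · refine sum_congr rfl fun r _ ↦ ?_
    push_cast
    simp only [add_sub_add_right_eq_sub]
    rw [smul_smul, smul_smul, ← neg_smul, ← add_smul]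
    exact congrArg (· • _) (qSerreY_coeff_succ e a m hv0 he r)
  · simp

end QSerre

theorem stmt13_general {K : Type*} [Field K]
    {A : Type*} [Ring A] [Algebra (RatFunc K) A]
    (ε : ℕ) (hε : 0 < ε) (v : RatFunc K) (hv : v = RatFunc.X ^ ε)
    (B X : A) (a : ℤ) (e : ℤ) (he : e = 1 ∨ e = -1)
    (y : ℕ → A)
    (hy : ∀ m : ℕ, y m = ∑ r ∈ Finset.range (m + 1),
        ((-1 : RatFunc K) ^ r * v ^ (e * (r : ℤ) * (a - (m : ℤ) + 1))) •
          (dp v B (r : ℤ) * X * dp v B ((m : ℤ) - (r : ℤ))))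
    (m : ℕ) :
    -(v ^ (-e * (2 * (m : ℤ) - a)) • (B * y m)) + y m * B
      = qint v ((m : ℤ) + 1) • y (m + 1) := by
  obtain rfl : y = qSerreY v e a B X := funext hy
  have hv0 : v ≠ 0 := hv ▸ pow_ne_zero ε RatFunc.X_ne_zero
  have hfin : ¬IsOfFinOrder v := hv ▸ RatFunc.not_isOfFinOrder_X_pow hε
  have hq (n : ℕ) : qint v (n + 1) ≠ 0 := by
    exact_mod_cast qint_ne_zero v hv0 hfin n.succ_ne_zero
  exact qSerreY_recursion e a B X m hv0 hq he

/-- (Formal recursion lemma underlying Theorem 3.1 and Proposition 3.4; analogue of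
Lusztig's Lemma 7.1.2.) With y_m = ∑_{r+s=m} (−1)^r q_i^{er(a−m+1)} B^{(r)} X B^{(s)},
for every m ≥ 0: −q_i^{−e(2m−a)} B y_m + y_m B = [m+1] y_{m+1}. -/
theorem stmt13 {K : Type*} [Field K] [CharZero K]
    {A : Type*} [Ring A] [Algebra (RatFunc K) A]
    (ε : ℕ) (hε : 0 < ε) (v : RatFunc K) (hv : v = RatFunc.X ^ ε)
    (B X : A) (a : ℤ) (e : ℤ) (he : e = 1 ∨ e = -1)
    (y : ℕ → A)
    (hy : ∀ m : ℕ, y m = ∑ r ∈ Finset.range (m + 1),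
        ((-1 : RatFunc K) ^ r * v ^ (e * (r : ℤ) * (a - (m : ℤ) + 1))) •
          (dp v B (r : ℤ) * X * dp v B ((m : ℤ) - (r : ℤ))))
    (m : ℕ) :
    -(v ^ (-e * (2 * (m : ℤ) - a)) • (B * y m)) + y m * B
      = qint v ((m : ℤ) + 1) • y (m + 1) :=
  stmt13_general ε hε v hv B X a e he y hy m
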